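/- arXiv:1206.3133 — 3 statements merged into one kernel-verified Lean document; each statement's English description precedes it below -/
import Mathlib

section
/- Let $X, Y, Z$ be random variables on finite sets with joint law $P_{XYZ}(x,y,z) = P_X(x) P_{Y|X}(y|x) P_{Z|X}(z|x)$ for fixed conditional kernels $P_{Y|X}, P_{Z|X}$. Then the conditional mutual information $I(X; Y \mid Z)$ is a concave function of the input distribution $P_X$. -/
open Finset

variable {X Y Z : Type*} [Fintype X] [Fintype Y] [Fintype Z]

/-- Joint distribution induced by input `px` and the two independent channels. -/
noncomputable def joint (px : X → ℝ) (pyx : X → Y → ℝ) (pzx : X → Z → ℝ)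
    (x : X) (y : Y) (z : Z) : ℝ :=
  px x * pyx x y * pzx x z

/-- Conditional mutual information `I(X;Y|Z)` for the joint law `joint px pyx pzx`. -/
noncomputable def condMI (px : X → ℝ) (pyx : X → Y → ℝ) (pzx : X → Z → ℝ) : ℝ :=
  ∑ x, ∑ y, ∑ z,
    joint px pyx pzx x y z *
      Real.log (joint px pyx pzx x y z * (∑ x', ∑ y', joint px pyx pzx x' y' z) /
        ((∑ y', joint px pyx pzx x y' z) * (∑ x', joint px pyx pzx x' y z)))

/-- Two-term log-sum inequality. -/
lemma logsum2 {u v p q : ℝ} (hu : 0 ≤ u) (hup : u ≤ p) (hv : 0 ≤ v) (hvq : v ≤ q) :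
    u * (Real.log p - Real.log u) + v * (Real.log q - Real.log v)
      ≤ (u + v) * (Real.log (p + q) - Real.log (u + v)) := by
  rcases eq_or_lt_of_le hu with hu0 | hu0
  · rcases eq_or_lt_of_le hv with hv0 | hv0
    · simp [← hu0, ← hv0]
    · have hq : 0 < q := lt_of_lt_of_le hv0 hvq
      have hlog : Real.log q ≤ Real.log (p + q) :=
        Real.log_le_log hq (by linarith)
      rw [← hu0]
      simp only [zero_mul, zero_add]
      nlinarith
  · rcases eq_or_lt_of_le hv with hv0 | hv0
    · have hp : 0 < p := lt_of_lt_of_le hu0 hup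
      have hlog : Real.log p ≤ Real.log (p + q) :=
        Real.log_le_log hp (by linarith)
      rw [← hv0]
      simp only [zero_mul, add_zero]
      nlinarith
    · have hp : 0 < p := lt_of_lt_of_le hu0 hup
      have hq : 0 < q := lt_of_lt_of_le hv0 hvq
      have huv : 0 < u + v := by linarith
      have hpq : 0 < p + q := by linarith
      have key := strictConcaveOn_log_Ioi.concaveOn.2
        (Set.mem_Ioi.2 (div_pos hp hu0)) (Set.mem_Ioi.2 (div_pos hq hv0))
        (le_of_lt (div_pos hu0 huv)) (le_of_lt (div_pos hv0 huv))
        (by field_simp)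
      rw [smul_eq_mul, smul_eq_mul, smul_eq_mul, smul_eq_mul] at key
      have harg : u / (u + v) * (p / u) + v / (u + v) * (q / v) = (p + q) / (u + v) := by
        field_simp
      rw [harg, Real.log_div hp.ne' hu0.ne', Real.log_div hq.ne' hv0.ne',
        Real.log_div hpq.ne' huv.ne'] at key
      have h2 := mul_le_mul_of_nonneg_left key huv.le
      have h3 : (u + v) * (u / (u + v) * (Real.log p - Real.log u)
          + v / (u + v) * (Real.log q - Real.log v))
          = u * (Real.log p - Real.log u) + v * (Real.log q - Real.log v) := by
        field_simp
      linarith [h2, h3.ge, h3.le]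

/-- Concavity of `(c, a) ↦ c * (log a - log c)` on `{0 ≤ c ≤ a}`. -/
lemma phi_concave {t c₁ a₁ c₂ a₂ : ℝ} (ht0 : 0 ≤ t) (ht1 : t ≤ 1)
    (hc₁ : 0 ≤ c₁) (hca₁ : c₁ ≤ a₁) (hc₂ : 0 ≤ c₂) (hca₂ : c₂ ≤ a₂) :
    t * (c₁ * (Real.log a₁ - Real.log c₁)) + (1 - t) * (c₂ * (Real.log a₂ - Real.log c₂))
      ≤ (t * c₁ + (1 - t) * c₂) *
        (Real.log (t * a₁ + (1 - t) * a₂) - Real.log (t * c₁ + (1 - t) * c₂)) := by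
  have scale : ∀ s c a : ℝ, 0 ≤ s → 0 ≤ c → c ≤ a →
      s * (c * (Real.log a - Real.log c))
        = (s * c) * (Real.log (s * a) - Real.log (s * c)) := by
    intro s c a hs hc hca
    rcases eq_or_lt_of_le hs with h | h
    · simp [← h]
    rcases eq_or_lt_of_le hc with h' | h'
    · simp [← h']
    · have ha : 0 < a := lt_of_lt_of_le h' hca
      rw [Real.log_mul h.ne' ha.ne', Real.log_mul h.ne' h'.ne']
      ring
  rw [scale t c₁ a₁ ht0 hc₁ hca₁, scale (1 - t) c₂ a₂ (by linarith) hc₂ hca₂]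
  exact logsum2 (mul_nonneg ht0 hc₁) (mul_le_mul_of_nonneg_left hca₁ ht0)
    (mul_nonneg (by linarith) hc₂) (mul_le_mul_of_nonneg_left hca₂ (by linarith))

section decomp

variable (pyx : X → Y → ℝ) (pzx : X → Z → ℝ)

lemma joint_nonneg (px : X → ℝ) (hpx : ∀ x, 0 ≤ px x)
    (hpyx : ∀ x y, 0 ≤ pyx x y) (hpzx : ∀ x z, 0 ≤ pzx x z)
    (x : X) (y : Y) (z : Z) : 0 ≤ joint px pyx pzx x y z :=
  mul_nonneg (mul_nonneg (hpx x) (hpyx x y)) (hpzx x z)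

lemma C_le_A (px : X → ℝ) (hpx : ∀ x, 0 ≤ px x)
    (hpyx : ∀ x y, 0 ≤ pyx x y) (hpzx : ∀ x z, 0 ≤ pzx x z) (y : Y) (z : Z) :
    (∑ x, joint px pyx pzx x y z) ≤ ∑ x', ∑ y', joint px pyx pzx x' y' z := by
  rw [Finset.sum_comm]
  exact Finset.single_le_sum
    (fun y' _ => Finset.sum_nonneg fun x _ =>
      joint_nonneg pyx pzx px hpx hpyx hpzx x y' z) (Finset.mem_univ y)

/-- Decomposition `I(X;Y|Z) = -H(Y|X) + H(Y|Z)`. -/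
lemma condMI_decomp
    (hpyx : ∀ x y, 0 ≤ pyx x y) (hpyx1 : ∀ x, ∑ y, pyx x y = 1)
    (hpzx : ∀ x z, 0 ≤ pzx x z) (hpzx1 : ∀ x, ∑ z, pzx x z = 1)
    (px : X → ℝ) (hpx : ∀ x, 0 ≤ px x) :
    condMI px pyx pzx =
      (∑ x, px x * ∑ y, pyx x y * Real.log (pyx x y)) +
      ∑ z, ∑ y, (∑ x, joint px pyx pzx x y z) *
        (Real.log (∑ x', ∑ y', joint px pyx pzx x' y' z) -
         Real.log (∑ x, joint px pyx pzx x y z)) := by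
  have hterm : ∀ x y z,
      joint px pyx pzx x y z *
        Real.log (joint px pyx pzx x y z * (∑ x', ∑ y', joint px pyx pzx x' y' z) /
          ((∑ y', joint px pyx pzx x y' z) * (∑ x', joint px pyx pzx x' y z)))
      = joint px pyx pzx x y z * Real.log (pyx x y)
        + joint px pyx pzx x y z *
          (Real.log (∑ x', ∑ y', joint px pyx pzx x' y' z) -
           Real.log (∑ x', joint px pyx pzx x' y z)) := by
    intro x y z
    have hj0 : 0 ≤ joint px pyx pzx x y z :=
      joint_nonneg pyx pzx px hpx hpyx hpzx x y z
    rcases eq_or_lt_of_le hj0 with hj | hj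
    · rw [← hj]; ring
    · have hxne : px x ≠ 0 := by
        intro h; rw [joint, h] at hj; simp at hj
      have hyne : pyx x y ≠ 0 := by
        intro h; rw [joint, h] at hj; simp at hj
      have hzne : pzx x z ≠ 0 := by
        intro h; rw [joint, h] at hj; simp at hj
      have hB : (∑ y', joint px pyx pzx x y' z) = px x * pzx x z := by
        simp only [joint]
        rw [show (∑ y', px x * pyx x y' * pzx x z)
            = (px x * pzx x z) * ∑ y', pyx x y' from by
          rw [Finset.mul_sum]; exact Finset.sum_congr rfl fun _ _ => by ring]
        rw [hpyx1, mul_one]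
      have hC : 0 < ∑ x', joint px pyx pzx x' y z :=
        lt_of_lt_of_le hj (Finset.single_le_sum
          (fun x' _ => joint_nonneg pyx pzx px hpx hpyx hpzx x' y z)
          (Finset.mem_univ x))
      have hA : 0 < ∑ x', ∑ y', joint px pyx pzx x' y' z :=
        lt_of_lt_of_le hC (C_le_A pyx pzx px hpx hpyx hpzx y z)
      rw [hB]
      have harg : joint px pyx pzx x y z * (∑ x', ∑ y', joint px pyx pzx x' y' z) /
          ((px x * pzx x z) * (∑ x', joint px pyx pzx x' y z))
          = pyx x y * ((∑ x', ∑ y', joint px pyx pzx x' y' z) /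
              (∑ x', joint px pyx pzx x' y z)) := by
        rw [joint]
        field_simp
      rw [harg, Real.log_mul hyne (div_ne_zero hA.ne' hC.ne'),
        Real.log_div hA.ne' hC.ne']
      ring
  unfold condMI
  calc
    (∑ x, ∑ y, ∑ z, joint px pyx pzx x y z *
        Real.log (joint px pyx pzx x y z * (∑ x', ∑ y', joint px pyx pzx x' y' z) /
          ((∑ y', joint px pyx pzx x y' z) * (∑ x', joint px pyx pzx x' y z))))
      = ∑ x, ∑ y, ∑ z, (joint px pyx pzx x y z * Real.log (pyx x y)
          + joint px pyx pzx x y z *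
            (Real.log (∑ x', ∑ y', joint px pyx pzx x' y' z) -
             Real.log (∑ x', joint px pyx pzx x' y z))) := by
        exact Finset.sum_congr rfl fun x _ => Finset.sum_congr rfl fun y _ =>
          Finset.sum_congr rfl fun z _ => hterm x y z
    _ = (∑ x, ∑ y, ∑ z, joint px pyx pzx x y z * Real.log (pyx x y))
        + ∑ x, ∑ y, ∑ z, joint px pyx pzx x y z *
            (Real.log (∑ x', ∑ y', joint px pyx pzx x' y' z) -
             Real.log (∑ x', joint px pyx pzx x' y z)) := by
        simp [Finset.sum_add_distrib]
    _ = (∑ x, px x * ∑ y, pyx x y * Real.log (pyx x y)) +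
        ∑ z, ∑ y, (∑ x, joint px pyx pzx x y z) *
          (Real.log (∑ x', ∑ y', joint px pyx pzx x' y' z) -
           Real.log (∑ x, joint px pyx pzx x y z)) := by
        congr 1
        · refine Finset.sum_congr rfl fun x _ => ?_
          rw [Finset.mul_sum]
          refine Finset.sum_congr rfl fun y _ => ?_
          rw [← Finset.sum_mul]
          rw [show (∑ z, joint px pyx pzx x y z) = px x * pyx x y from by
            simp only [joint]; rw [← Finset.mul_sum, hpzx1, mul_one]]
          ring
        · calc
            (∑ x, ∑ y, ∑ z, joint px pyx pzx x y z *
                (Real.log (∑ x', ∑ y', joint px pyx pzx x' y' z) -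
                 Real.log (∑ x', joint px pyx pzx x' y z)))
              = ∑ x, ∑ z, ∑ y, joint px pyx pzx x y z *
                  (Real.log (∑ x', ∑ y', joint px pyx pzx x' y' z) -
                   Real.log (∑ x', joint px pyx pzx x' y z)) :=
                Finset.sum_congr rfl fun x _ => Finset.sum_comm
            _ = ∑ z, ∑ x, ∑ y, joint px pyx pzx x y z *
                  (Real.log (∑ x', ∑ y', joint px pyx pzx x' y' z) -
                   Real.log (∑ x', joint px pyx pzx x' y z)) := Finset.sum_comm
            _ = ∑ z, ∑ y, ∑ x, joint px pyx pzx x y z *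
                  (Real.log (∑ x', ∑ y', joint px pyx pzx x' y' z) -
                   Real.log (∑ x', joint px pyx pzx x' y z)) :=
                Finset.sum_congr rfl fun z _ => Finset.sum_comm
            _ = ∑ z, ∑ y, (∑ x, joint px pyx pzx x y z) *
                  (Real.log (∑ x', ∑ y', joint px pyx pzx x' y' z) -
                   Real.log (∑ x, joint px pyx pzx x y z)) := by
                refine Finset.sum_congr rfl fun z _ => Finset.sum_congr rfl fun y _ => ?_
                rw [← Finset.sum_mul]

end decomp

theorem condMI_concave_in_input
    (pyx : X → Y → ℝ) (pzx : X → Z → ℝ)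
    (hpyx : ∀ x y, 0 ≤ pyx x y) (hpyx1 : ∀ x, ∑ y, pyx x y = 1)
    (hpzx : ∀ x z, 0 ≤ pzx x z) (hpzx1 : ∀ x, ∑ z, pzx x z = 1)
    (px₁ px₂ : X → ℝ)
    (h₁ : ∀ x, 0 ≤ px₁ x) (h₁1 : ∑ x, px₁ x = 1)
    (h₂ : ∀ x, 0 ≤ px₂ x) (h₂1 : ∑ x, px₂ x = 1)
    (t : ℝ) (ht0 : 0 ≤ t) (ht1 : t ≤ 1) :
    t * condMI px₁ pyx pzx + (1 - t) * condMI px₂ pyx pzx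
      ≤ condMI (fun x => t * px₁ x + (1 - t) * px₂ x) pyx pzx := by
  set p : X → ℝ := fun x => t * px₁ x + (1 - t) * px₂ x with hp
  have hpnn : ∀ x, 0 ≤ p x := fun x => by
    have := h₁ x; have := h₂ x; dsimp [p]; nlinarith
  rw [condMI_decomp pyx pzx hpyx hpyx1 hpzx hpzx1 px₁ h₁,
    condMI_decomp pyx pzx hpyx hpyx1 hpzx hpzx1 px₂ h₂,
    condMI_decomp pyx pzx hpyx hpyx1 hpzx hpzx1 p hpnn]
  have hjlin : ∀ x y z, joint p pyx pzx x y z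
      = t * joint px₁ pyx pzx x y z + (1 - t) * joint px₂ pyx pzx x y z := by
    intro x y z; simp only [joint, p]; ring
  have hClin : ∀ y z, (∑ x, joint p pyx pzx x y z)
      = t * (∑ x, joint px₁ pyx pzx x y z) + (1 - t) * (∑ x, joint px₂ pyx pzx x y z) := by
    intro y z
    simp only [hjlin, Finset.sum_add_distrib, Finset.mul_sum]
  have hAlin : ∀ z, (∑ x', ∑ y', joint p pyx pzx x' y' z)
      = t * (∑ x', ∑ y', joint px₁ pyx pzx x' y' z)
        + (1 - t) * (∑ x', ∑ y', joint px₂ pyx pzx x' y' z) := by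
    intro z
    simp only [hjlin, Finset.sum_add_distrib, Finset.mul_sum]
  have hL : (∑ x, p x * ∑ y, pyx x y * Real.log (pyx x y))
      = t * (∑ x, px₁ x * ∑ y, pyx x y * Real.log (pyx x y))
        + (1 - t) * (∑ x, px₂ x * ∑ y, pyx x y * Real.log (pyx x y)) := by
    simp only [p, add_mul, Finset.sum_add_distrib, Finset.mul_sum, mul_assoc]
  have hG : t * (∑ z, ∑ y, (∑ x, joint px₁ pyx pzx x y z) *
        (Real.log (∑ x', ∑ y', joint px₁ pyx pzx x' y' z) -
         Real.log (∑ x, joint px₁ pyx pzx x y z)))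
      + (1 - t) * (∑ z, ∑ y, (∑ x, joint px₂ pyx pzx x y z) *
          (Real.log (∑ x', ∑ y', joint px₂ pyx pzx x' y' z) -
           Real.log (∑ x, joint px₂ pyx pzx x y z)))
      ≤ ∑ z, ∑ y, (∑ x, joint p pyx pzx x y z) *
          (Real.log (∑ x', ∑ y', joint p pyx pzx x' y' z) -
           Real.log (∑ x, joint p pyx pzx x y z)) := by
    rw [Finset.mul_sum, Finset.mul_sum, ← Finset.sum_add_distrib]
    refine Finset.sum_le_sum fun z _ => ?_
    rw [Finset.mul_sum, Finset.mul_sum, ← Finset.sum_add_distrib]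
    refine Finset.sum_le_sum fun y _ => ?_
    rw [hClin y z, hAlin z]
    exact phi_concave ht0 ht1
      (Finset.sum_nonneg fun x _ => joint_nonneg pyx pzx px₁ h₁ hpyx hpzx x y z)
      (C_le_A pyx pzx px₁ h₁ hpyx hpzx y z)
      (Finset.sum_nonneg fun x _ => joint_nonneg pyx pzx px₂ h₂ hpyx hpzx x y z)
      (C_le_A pyx pzx px₂ h₂ hpyx hpzx y z)
  rw [hL]
  nlinarith [hG]
end

section
/- Let $\mathcal{J}_1, \ldots, \mathcal{J}_k$ be subspaces $U_1, \ldots, U_k$ and let $E$ be a subspace of a finite-dimensional vector space $V$. Suppose nonnegative integers $\theta_1, \ldots, \theta_k$ satisfy: for every nonempty subset $S \subseteq \{1,\ldots,k\}$, $\sum_{i \in S} \theta_i \le \dim(\sum_{i \in S} U_i + E) - \dim E$. Then there exist subspaces $U'_i \sqsubseteq U_i$ with $\dim U'_i = \theta_i$ such that $\dim(E + U'_1 + \cdots + U'_k) = \dim E + \theta_1 + \cdots + \theta_k$ (i.e., the $U'_i$ and $E$ are in direct sum). -/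
/-!
A rank-function version of Rado's theorem, proved one vector at a time. Call `S` tight if
`∑ i ∈ S, θ i + dim E = dim (E + ∑ i ∈ S, U i)`. By submodularity of the rank, tight sets are
closed under union, so for an index `i` with `θ i > 0` there is a largest tight set `T ∌ i`,
and the Hall condition forces `U i ⊄ E + ∑ i ∈ T, U i`. A vector `u` of `U i` outside that space
can be moved into `E` while `θ i` drops by one without breaking the Hall condition; by induction
on `∑ θ` the smaller problem has a solution, to whose `i`-th subspace we add `u` back.
-/

open Module Submodule

theorem iSup_update_sup {α ι : Type*} [CompleteLattice α] [DecidableEq ι] (f : ι → α) (i : ι)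
    (a : α) : ⨆ j, Function.update f i (f i ⊔ a) j = a ⊔ ⨆ j, f j := by
  rw [iSup_split_single _ i, iSup_split_single f i, Function.update_self, sup_comm (f i) a,
    sup_assoc]
  congr 2
  exact iSup_congr fun j => iSup_congr fun hj => Function.update_of_ne hj _ _

theorem Finset.sum_add_pi_single {ι M : Type*} [DecidableEq ι] [AddCommMonoid M] (f : ι → M)
    (i : ι) (a : M) (s : Finset ι) :
    ∑ j ∈ s, (f + Pi.single i a : ι → M) j = ∑ j ∈ s, f j + if i ∈ s then a else 0 := by
  simp only [Pi.add_apply, Finset.sum_add_distrib, Finset.sum_pi_single']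

section

variable {F V ι : Type*} [Field F] [AddCommGroup V] [Module F V]
variable (U : ι → Submodule F V) (E : Submodule F V)

def joinWith (S : Finset ι) : Submodule F V := (⨆ i ∈ S, U i) ⊔ E

/-- The condition `∑ i ∈ S, θ i ≤ dim (E + ∑ i ∈ S, U i) - dim E`, with the truncated subtraction
moved to the other side. -/
def HallCondition (θ : ι → ℕ) : Prop :=
  ∀ S : Finset ι, ∑ i ∈ S, θ i + finrank F E ≤ finrank F (joinWith U E S)

def IsTight (θ : ι → ℕ) (S : Finset ι) : Prop :=
  ∑ i ∈ S, θ i + finrank F E = finrank F (joinWith U E S)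

def IsTransversal [Fintype ι] (U' : ι → Submodule F V) (θ : ι → ℕ) : Prop :=
  (∀ i, U' i ≤ U i ∧ finrank F (U' i) = θ i) ∧
    finrank F ↥(E ⊔ ⨆ i, U' i) = finrank F E + ∑ i, θ i

variable {U E}

@[simp]
theorem joinWith_empty : joinWith U E ∅ = E := by simp [joinWith]

theorem le_joinWith (S : Finset ι) : E ≤ joinWith U E S := le_sup_right

theorem joinWith_mono {S T : Finset ι} (h : S ⊆ T) : joinWith U E S ≤ joinWith U E T :=
  sup_le_sup_right (biSup_mono fun _ hi => h hi) E

theorem joinWith_union [DecidableEq ι] (S T : Finset ι) :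
    joinWith U E (S ∪ T) = joinWith U E S ⊔ joinWith U E T := by
  rw [joinWith, Finset.iSup_union, sup_sup_distrib_right]
  rfl

theorem joinWith_insert [DecidableEq ι] (i : ι) (S : Finset ι) :
    joinWith U E (insert i S) = U i ⊔ joinWith U E S := by
  rw [joinWith, Finset.iSup_insert, sup_assoc]
  rfl

theorem joinWith_sup (W : Submodule F V) (S : Finset ι) :
    joinWith U (E ⊔ W) S = joinWith U E S ⊔ W :=
  (sup_assoc _ _ _).symm

theorem isTight_empty (θ : ι → ℕ) : IsTight U E θ ∅ := by
  rw [IsTight, joinWith_empty, Finset.sum_empty, zero_add]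

theorem HallCondition.not_le_joinWith [DecidableEq ι] {θ : ι → ℕ} (hθ : HallCondition U E θ)
    {i : ι} (hi : θ i ≠ 0) {T : Finset ι} (hiT : i ∉ T) (hT : IsTight U E θ T) :
    ¬ U i ≤ joinWith U E T := by
  intro hle
  have h := hθ (insert i T)
  rw [joinWith_insert, sup_eq_right.mpr hle, Finset.sum_insert hiT, ← hT] at h
  omega

variable [FiniteDimensional F V]

theorem Submodule.finrank_finsetSup_le_sum (s : Finset ι) (f : ι → Submodule F V) :
    finrank F ↥(s.sup f) ≤ ∑ i ∈ s, finrank F (f i) := by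
  classical
  induction s using Finset.induction with
  | empty => simp
  | insert a s ha ih =>
    rw [Finset.sup_insert, Finset.sum_insert ha]
    exact (finrank_add_le_finrank_add_finrank _ _).trans (by omega)

theorem Submodule.finrank_iSup_le_sum [Fintype ι] (f : ι → Submodule F V) :
    finrank F ↥(⨆ i, f i) ≤ ∑ i, finrank F (f i) := by
  rw [← Finset.sup_univ_eq_iSup]
  exact finrank_finsetSup_le_sum _ _

theorem finrank_joinWith_union_add_inter_le [DecidableEq ι] (S T : Finset ι) :
    finrank F (joinWith U E (S ∪ T)) + finrank F (joinWith U E (S ∩ T)) ≤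
      finrank F (joinWith U E S) + finrank F (joinWith U E T) := by
  have hinter : joinWith U E (S ∩ T) ≤ joinWith U E S ⊓ joinWith U E T :=
    le_inf (joinWith_mono Finset.inter_subset_left) (joinWith_mono Finset.inter_subset_right)
  have := finrank_mono hinter
  have := finrank_sup_add_finrank_inf_eq (joinWith U E S) (joinWith U E T)
  rw [joinWith_union]
  omega

namespace HallCondition

variable {θ : ι → ℕ}

theorem isTight_union [DecidableEq ι] (hθ : HallCondition U E θ) {S T : Finset ι}
    (hS : IsTight U E θ S) (hT : IsTight U E θ T) : IsTight U E θ (S ∪ T) := by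
  have hsub := finrank_joinWith_union_add_inter_le (U := U) (E := E) S T
  have hsum := Finset.sum_union_inter (s₁ := S) (s₂ := T) (f := θ)
  have hunion := hθ (S ∪ T)
  have hinter := hθ (S ∩ T)
  unfold IsTight at *
  omega

theorem exists_maximal_isTight [Fintype ι] (hθ : HallCondition U E θ) (i : ι) :
    ∃ T, i ∉ T ∧ IsTight U E θ T ∧ ∀ S, i ∉ S → IsTight U E θ S → S ⊆ T := by
  classical
  let tight := Finset.univ.filter fun S : Finset ι => i ∉ S ∧ IsTight U E θ S
  have hmax : tight.sup id ∈ {T | i ∉ T ∧ IsTight U E θ T} :=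
    Finset.sup_induction (p := (· ∈ {T | i ∉ T ∧ IsTight U E θ T}))
      ⟨Finset.notMem_empty i, isTight_empty θ⟩
      (fun S hS T hT => ⟨by simp [hS.1, hT.1], hθ.isTight_union hS.2 hT.2⟩)
      (fun S hS => (Finset.mem_filter.mp hS).2)
  exact ⟨_, hmax.1, hmax.2, fun S hiS hS =>
    Finset.le_sup (f := id) (Finset.mem_filter.mpr ⟨Finset.mem_univ S, hiS, hS⟩)⟩

theorem sup_span_singleton [DecidableEq ι] {i : ι} {u : V}
    (hθ : HallCondition U E (θ + Pi.single i 1)) (hu : u ∈ U i)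
    (hfree : ∀ S, i ∉ S → IsTight U E (θ + Pi.single i 1) S → u ∉ joinWith U E S) :
    HallCondition U (E ⊔ span F {u}) θ := by
  have huE : u ∉ E := by simpa using hfree ∅ (Finset.notMem_empty i) (isTight_empty _)
  intro S
  have hS := hθ S
  have hsum := Finset.sum_add_pi_single θ i 1 S
  rw [hsum] at hS
  rw [finrank_sup_span_singleton huE, joinWith_sup]
  by_cases hiS : i ∈ S
  · have hspan : span F {u} ≤ joinWith U E S := by
      rw [span_singleton_le_iff_mem, ← Finset.insert_eq_of_mem hiS, joinWith_insert]
      exact mem_sup_left hu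
    rw [sup_eq_left.mpr hspan]
    simp only [hiS, if_true] at hS
    omega
  · simp only [hiS, if_false, add_zero] at hS hsum
    by_cases htight : IsTight U E (θ + Pi.single i 1) S
    · have huS := hfree S hiS htight
      rw [IsTight, hsum] at htight
      rw [finrank_sup_span_singleton huS]
      omega
    · rw [IsTight, hsum] at htight
      have := finrank_mono (le_sup_left : joinWith U E S ≤ joinWith U E S ⊔ span F {u})
      omega

end HallCondition

theorem IsTransversal.update_sup_span_singleton [Fintype ι] [DecidableEq ι]
    {U' : ι → Submodule F V} {θ : ι → ℕ} {i : ι} {u : V} (hu : u ∈ U i) (huE : u ∉ E)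
    (h : IsTransversal U (E ⊔ span F {u}) U' θ) :
    IsTransversal U E (Function.update U' i (U' i ⊔ span F {u})) (θ + Pi.single i 1) := by
  obtain ⟨hU', hrank⟩ := h
  have hdisj : (E ⊔ span F {u}) ⊓ ⨆ j, U' j = ⊥ := by
    have := finrank_sup_add_finrank_inf_eq (E ⊔ span F {u}) (⨆ j, U' j)
    have := finrank_iSup_le_sum U'
    simp only [(hU' _).2] at this
    exact finrank_eq_zero.mp (by omega)
  have huU' : u ∉ U' i := fun hmem => by
    have : u ∈ (E ⊔ span F {u}) ⊓ ⨆ j, U' j :=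
      ⟨mem_sup_right (mem_span_singleton_self u), mem_iSup_of_mem i hmem⟩
    rw [hdisj, mem_bot] at this
    exact huE (this ▸ E.zero_mem)
  refine ⟨fun j => ?_, ?_⟩
  · rcases eq_or_ne j i with rfl | hj
    · rw [Function.update_self, Pi.add_apply, Pi.single_eq_same, finrank_sup_span_singleton huU',
        (hU' j).2]
      exact ⟨sup_le (hU' j).1 ((span_singleton_le_iff_mem _ _).mpr hu), rfl⟩
    · rw [Function.update_of_ne hj, Pi.add_apply, Pi.single_eq_of_ne hj, add_zero]
      exact hU' j
  · rw [iSup_update_sup, ← sup_assoc, hrank, finrank_sup_span_singleton huE,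
      Finset.sum_add_pi_single, if_pos (Finset.mem_univ i)]
    omega

theorem HallCondition.exists_isTransversal [Fintype ι] {θ : ι → ℕ} (hθ : HallCondition U E θ) :
    ∃ U', IsTransversal U E U' θ := by
  classical
  obtain ⟨n, hn⟩ : ∃ n, ∑ i, θ i = n := ⟨_, rfl⟩
  induction n generalizing E θ with
  | zero =>
    have hθ0 : θ = 0 := funext fun i => Finset.sum_eq_zero_iff.mp hn i (Finset.mem_univ i)
    subst hθ0
    refine ⟨fun _ => ⊥, fun i => ⟨bot_le, by simp⟩, ?_⟩
    rw [iSup_bot, sup_bot_eq, hn, add_zero]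
  | succ n ih =>
    obtain ⟨i, hi⟩ : ∃ i, θ i ≠ 0 := by
      by_contra! h
      simp [h] at hn
    set θ' := θ - Pi.single i 1
    have hθ' : θ = θ' + Pi.single i 1 := by
      funext j
      rcases eq_or_ne j i with rfl | hj
      · simp only [θ', Pi.add_apply, Pi.sub_apply, Pi.single_eq_same]
        omega
      · simp [θ', Pi.single_eq_of_ne hj]
    rw [hθ'] at hθ hn ⊢
    obtain ⟨T, hiT, hT, hTmax⟩ := hθ.exists_maximal_isTight i
    obtain ⟨u, hu, huT⟩ := SetLike.not_le_iff_exists.mp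
      (hθ.not_le_joinWith (by simp) hiT hT)
    have hfree S (hiS : i ∉ S) (hS : IsTight U E (θ' + Pi.single i 1) S) : u ∉ joinWith U E S :=
      fun h => huT (joinWith_mono (hTmax S hiS hS) h)
    rw [Finset.sum_add_pi_single, if_pos (Finset.mem_univ i)] at hn
    obtain ⟨U', hU'⟩ := ih (hθ.sup_span_singleton hu hfree) (by omega)
    exact ⟨_, hU'.update_sup_span_singleton hu fun h => huT (le_joinWith T h)⟩

end

theorem extract_orthogonal_subspaces_if
    (F V : Type*) [Field F] [AddCommGroup V] [Module F V]
    [FiniteDimensional F V] (k : ℕ)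
    (U : Fin k → Submodule F V) (E : Submodule F V) (θ : Fin k → ℕ)
    (h : ∀ S : Finset (Fin k), S.Nonempty →
      ∑ i ∈ S, θ i ≤ Module.finrank F ↥((⨆ i ∈ S, U i) ⊔ E) - Module.finrank F E) :
    ∃ U' : Fin k → Submodule F V,
      (∀ i, U' i ≤ U i ∧ Module.finrank F (U' i) = θ i) ∧
      Module.finrank F ↥(E ⊔ ⨆ i, U' i) = Module.finrank F E + ∑ i, θ i := by
  have hθ : HallCondition U E θ := by
    intro S
    rcases S.eq_empty_or_nonempty with rfl | hS
    · rw [joinWith_empty, Finset.sum_empty, zero_add]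
    · exact Nat.add_le_of_le_sub (finrank_mono (le_joinWith S)) (h S hS)
  exact hθ.exists_isTransversal
end

section
/- Let $\pi_A \sqsubseteq \mathbb{F}_q^{\ell}$ be a subspace of dimension $d_A$ and let $X_A$ be any matrix with $\mathrm{rowspan}(X_A) = \pi_A$, $X_A \in \mathbb{F}_q^{n_A \times \ell}$. If $F$ is uniform in $\mathbb{F}_q^{n \times n_A}$ and $\Pi = \mathrm{rowspan}(F X_A)$, then for any subspace $\pi \sqsubseteq \pi_A$ with $\dim \pi = d$, $\Pr[\Pi = \pi] = \xi(n, d)\, q^{-n d_A}$, where $\xi(n,d)$ is the number of $n \times \ell$ matrices whose rows span a fixed $d$-dimensional subspace. -/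
/-!
The map `G ↦ G * XA` is additive and its image is the set of matrices whose rows lie in `πA`, of
size `q ^ (n * dA)`. Every `Y` with row span `π ≤ πA` is in the image, so its preimage is a coset of
the kernel, which by Lagrange has `q ^ (n * nA) / q ^ (n * dA)` elements.
-/

namespace AddMonoidHom

variable {G H : Type*} [AddGroup G] [AddGroup H]

noncomputable def subtypeCompEquivProdKer (f : G →+ H) (p : H → Prop)
    (hp : ∀ y, p y → y ∈ Set.range f) : {g // p (f g)} ≃ {y // p y} × f.ker :=
  let s : {y // p y} → G := fun y => (hp y y.2).choose
  have hs : ∀ y, f (s y) = y := fun y => (hp y y.2).choose_spec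
  have hfs : ∀ y (k : f.ker), f (s y + k) = y := fun y k => by simp [hs, f.mem_ker.1 k.2]
  { toFun := fun g => (⟨f g, g.2⟩, ⟨-s ⟨f g, g.2⟩ + g, by simp [hs]⟩)
    invFun := fun yk => ⟨s yk.1 + yk.2, by simpa [hfs] using yk.1.2⟩
    left_inv := fun g => Subtype.ext <| by simp
    right_inv := fun ⟨y, k⟩ => by ext <;> simp [hfs] }

theorem natCard_subtype_comp_eq_mul_natCard_ker (f : G →+ H) (p : H → Prop)
    (hp : ∀ y, p y → y ∈ Set.range f) :
    Nat.card {g // p (f g)} = Nat.card {y // p y} * Nat.card f.ker := by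
  rw [Nat.card_congr (f.subtypeCompEquivProdKer p hp), Nat.card_prod]

theorem natCard_ker_mul_natCard_range (f : G →+ H) :
    Nat.card f.ker * Nat.card (Set.range f) = Nat.card G := by
  rw [← coe_range, SetLike.coe_sort_coe, ← AddSubgroup.index_ker, AddSubgroup.card_mul_index]

end AddMonoidHom

namespace Matrix

variable {l m n : Type*} [Fintype m]

theorem range_mul_right {R : Type*} [Semiring R] (M : Matrix m n R) :
    Set.range (fun A : Matrix l m R => A * M) =
      Set.univ.pi fun _ => (Submodule.span R (Set.range M) : Set (n → R)) := by
  have h := congrArg SetLike.coe (M.vecMulLinear.range_compLeft l)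
  rwa [range_vecMulLinear, LinearMap.coe_range, Submodule.coe_pi] at h

theorem natCard_range_mul_right {R : Type*} [Semiring R] [Fintype l] (M : Matrix m n R) :
    Nat.card (Set.range fun A : Matrix l m R => A * M) =
      Nat.card (Submodule.span R (Set.range M)) ^ Fintype.card l := by
  rw [range_mul_right]
  exact (Nat.card_congr (Equiv.Set.univPi _)).trans <| by
    rw [Nat.card_fun, Nat.card_eq_fintype_card (α := l), SetLike.coe_sort_coe]

theorem natCard_ker_addMonoidHomMulRight_mul {K : Type*} [Field K] [Fintype K] [Fintype l]
    (M : Matrix m n K) :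
    Nat.card (M.addMonoidHomMulRight (l := l)).ker *
        Fintype.card K ^ (Fintype.card l * Module.finrank K (Submodule.span K (Set.range M))) =
      Fintype.card K ^ (Fintype.card l * Fintype.card m) := by
  have hrange : Nat.card (Set.range (M.addMonoidHomMulRight (l := l))) =
      Fintype.card K ^ (Fintype.card l * Module.finrank K (Submodule.span K (Set.range M))) := by
    have := Module.Finite.span_of_finite K (Set.finite_range M)
    rw [show Set.range (M.addMonoidHomMulRight (l := l)) = Set.range fun A : Matrix l m K => A * M
        from rfl, natCard_range_mul_right, Module.natCard_eq_pow_finrank (K := K),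
      Nat.card_eq_fintype_card, ← pow_mul, mul_comm]
  rw [← hrange, AddMonoidHom.natCard_ker_mul_natCard_range]
  change Nat.card (l → m → K) = _
  rw [Nat.card_fun, Nat.card_fun, Nat.card_eq_fintype_card (α := K), Nat.card_eq_fintype_card,
    Nat.card_eq_fintype_card, ← pow_mul, mul_comm]

end Matrix

theorem subspace_channel_transition_probability_general
    (F : Type*) [Field F] [Fintype F] (n nA ℓ dA : ℕ)
    (XA : Matrix (Fin nA) (Fin ℓ) F) (πA π : Submodule F (Fin ℓ → F))
    (hXA : Submodule.span F (Set.range XA) = πA)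
    (hdA : Module.finrank F πA = dA)
    (hsub : π ≤ πA) :
    (Nat.card {G : Matrix (Fin n) (Fin nA) F //
        Submodule.span F (Set.range (G * XA)) = π} : ℚ)
      / (Fintype.card F : ℚ) ^ (n * nA)
      = (Nat.card {Y : Matrix (Fin n) (Fin ℓ) F //
          Submodule.span F (Set.range Y) = π} : ℚ)
        * (Fintype.card F : ℚ) ^ (-(n * dA : ℤ)) := by
  set f := XA.addMonoidHomMulRight (l := Fin n)
  have hrows : ∀ Y : Matrix (Fin n) (Fin ℓ) F,
      Submodule.span F (Set.range Y) = π → Y ∈ Set.range f := by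
    rintro Y rfl
    change Y ∈ Set.range fun G : Matrix (Fin n) (Fin nA) F => G * XA
    rw [Matrix.range_mul_right, hXA]
    exact fun i _ => hsub (Submodule.subset_span (Set.mem_range_self i))
  have hcard : Nat.card {G : Matrix (Fin n) (Fin nA) F //
      Submodule.span F (Set.range (G * XA)) = π} =
      Nat.card {Y : Matrix (Fin n) (Fin ℓ) F // Submodule.span F (Set.range Y) = π} *
        Nat.card f.ker :=
    f.natCard_subtype_comp_eq_mul_natCard_ker _ hrows
  have hker : (Nat.card f.ker : ℚ) * (Fintype.card F : ℚ) ^ (n * dA) =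
      (Fintype.card F : ℚ) ^ (n * nA) := by
    have h := XA.natCard_ker_addMonoidHomMulRight_mul (l := Fin n)
    rw [hXA, hdA, Fintype.card_fin, Fintype.card_fin] at h
    exact_mod_cast h
  have hker_ne : (Nat.card f.ker : ℚ) ≠ 0 := by exact_mod_cast Nat.card_pos.ne'
  have hq_ne : (Fintype.card F : ℚ) ≠ 0 := by exact_mod_cast Fintype.card_ne_zero
  rw [hcard, Nat.cast_mul, ← hker, zpow_neg, ← Int.natCast_mul, zpow_natCast]
  field_simp

theorem subspace_channel_transition_probability
    (F : Type*) [Field F] [Fintype F] (n nA ℓ dA d : ℕ)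
    (XA : Matrix (Fin nA) (Fin ℓ) F) (πA π : Submodule F (Fin ℓ → F))
    (hXA : Submodule.span F (Set.range XA) = πA)
    (hdA : Module.finrank F πA = dA)
    (hsub : π ≤ πA) (hd : Module.finrank F π = d) :
    (Nat.card {G : Matrix (Fin n) (Fin nA) F //
        Submodule.span F (Set.range (G * XA)) = π} : ℚ)
      / (Fintype.card F : ℚ) ^ (n * nA)
      = (Nat.card {Y : Matrix (Fin n) (Fin ℓ) F //
          Submodule.span F (Set.range Y) = π} : ℚ)
        * (Fintype.card F : ℚ) ^ (-(n * dA : ℤ)) :=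
  subspace_channel_transition_probability_general F n nA ℓ dA XA πA π hXA hdA hsub
end
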